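/- Let ω_Q be the canonical symplectic form on T*Q = E × (E →L[ℝ] ℝ), given by ω_Q((v,w),(v′,w′)) := w′(v) − w(v′). Then the pullbacks of ω_Q by the forced discrete Legendre transforms recover ω⁺ and ω⁻: for every x ∈ E × E and all U, V ∈ E × E, ω_Q( (fderiv ℝ FL⁺ x)(U), (fderiv ℝ FL⁺ x)(V) ) = ω⁺(x)(U,V) and ω_Q( (fderiv ℝ FL⁻ x)(U), (fderiv ℝ FL⁻ x)(V) ) = ω⁻(x)(U,V). -/

import Mathlib

open ContinuousLinearMap

variable {E : Type*} [NormedAddCommGroup E] [NormedSpace ℝ E] [FiniteDimensional ℝ E]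

/-- Partial Fréchet derivative in the first variable. -/
noncomputable def D1 (L : E × E → ℝ) (x : E × E) : E →L[ℝ] ℝ :=
  fderiv ℝ (fun a => L (a, x.2)) x.1

/-- Partial Fréchet derivative in the second variable. -/
noncomputable def D2 (L : E × E → ℝ) (x : E × E) : E →L[ℝ] ℝ :=
  fderiv ℝ (fun b => L (x.1, b)) x.2

/-- The force 1-form `f_d` on `E × E`. -/
noncomputable def fd (fm fp : E × E → (E →L[ℝ] ℝ)) (x : E × E) : (E × E) →L[ℝ] ℝ :=
  (fm x).comp (ContinuousLinearMap.fst ℝ E E) + (fp x).comp (ContinuousLinearMap.snd ℝ E E)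

/-- The 1-form `θ⁺` on `E × E`. -/
noncomputable def thetaP (Ld : E × E → ℝ) (fp : E × E → (E →L[ℝ] ℝ)) (x : E × E) :
    (E × E) →L[ℝ] ℝ := (D2 Ld x + fp x).comp (ContinuousLinearMap.snd ℝ E E)

/-- The 1-form `θ⁻` on `E × E`. -/
noncomputable def thetaM (Ld : E × E → ℝ) (fm : E × E → (E →L[ℝ] ℝ)) (x : E × E) :
    (E × E) →L[ℝ] ℝ := -((D1 Ld x + fm x).comp (ContinuousLinearMap.fst ℝ E E))

/-- The exterior derivative of a 1-form `α` on `E × E`, as a function of two vectors. -/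
noncomputable def extd (α : E × E → ((E × E) →L[ℝ] ℝ)) (x : E × E) (U V : E × E) : ℝ :=
  fderiv ℝ α x U V - fderiv ℝ α x V U

/-- The 2-form `ω⁺ := -dθ⁺` on `E × E`. -/
noncomputable def omegaP (Ld : E × E → ℝ) (fp : E × E → (E →L[ℝ] ℝ)) (x : E × E)
    (U V : E × E) : ℝ := -extd (thetaP Ld fp) x U V

/-- The 2-form `ω⁻ := -dθ⁻` on `E × E`. -/
noncomputable def omegaM (Ld : E × E → ℝ) (fm : E × E → (E →L[ℝ] ℝ)) (x : E × E)
    (U V : E × E) : ℝ := -extd (thetaM Ld fm) x U V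

/-- The forced discrete Legendre transform `FL⁺`. -/
noncomputable def FLp (Ld : E × E → ℝ) (fp : E × E → (E →L[ℝ] ℝ)) (x : E × E) :
    E × (E →L[ℝ] ℝ) := (x.2, D2 Ld x + fp x)

/-- The forced discrete Legendre transform `FL⁻`. -/
noncomputable def FLm (Ld : E × E → ℝ) (fm : E × E → (E →L[ℝ] ℝ)) (x : E × E) :
    E × (E →L[ℝ] ℝ) := (x.1, -D1 Ld x - fm x)

/-- The canonical symplectic form on `T*Q = E × (E →L[ℝ] ℝ)`:
`ω_Q((v,w),(v',w')) := w'(v) − w(v')`. -/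
noncomputable def omegaQ (P P' : E × (E →L[ℝ] ℝ)) : ℝ := P'.2 P.1 - P.2 P'.1


section Aux

variable {E : Type*} [NormedAddCommGroup E] [NormedSpace ℝ E] [FiniteDimensional ℝ E]

lemma D1_eq_comp (L : E × E → ℝ) (hL : ContDiff ℝ (⊤ : ℕ∞) L) (x : E × E) :
    D1 L x = (fderiv ℝ L x).comp (ContinuousLinearMap.inl ℝ E E) := by
  have hx : HasFDerivAt L (fderiv ℝ L x) (x.1, x.2) := by
    simpa using ((hL.differentiable (by simp)) x).hasFDerivAt
  have h1 : HasFDerivAt (fun a : E => (a, x.2)) (ContinuousLinearMap.inl ℝ E E) x.1 :=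
    HasFDerivAt.prodMk (hasFDerivAt_id x.1) (hasFDerivAt_const x.2 x.1)
  exact (hx.comp x.1 h1).fderiv

lemma D2_eq_comp (L : E × E → ℝ) (hL : ContDiff ℝ (⊤ : ℕ∞) L) (x : E × E) :
    D2 L x = (fderiv ℝ L x).comp (ContinuousLinearMap.inr ℝ E E) := by
  have hx : HasFDerivAt L (fderiv ℝ L x) (x.1, x.2) := by
    simpa using ((hL.differentiable (by simp)) x).hasFDerivAt
  have h1 : HasFDerivAt (fun b : E => (x.1, b)) (ContinuousLinearMap.inr ℝ E E) x.2 :=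
    HasFDerivAt.prodMk (hasFDerivAt_const x.1 x.2) (hasFDerivAt_id x.2)
  exact (hx.comp x.2 h1).fderiv

lemma D1_differentiable (L : E × E → ℝ) (hL : ContDiff ℝ (⊤ : ℕ∞) L) :
    Differentiable ℝ (fun x => D1 L x) := by
  have hfd : Differentiable ℝ (fun x => fderiv ℝ L x) :=
    (hL.fderiv_right (m := (⊤ : ℕ∞)) (by simp)).differentiable (by simp)
  have : (fun x => D1 L x)
      = fun x => ((ContinuousLinearMap.compL ℝ E (E × E) ℝ).flip
          (ContinuousLinearMap.inl ℝ E E)) (fderiv ℝ L x) := by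
    funext x
    simp [D1_eq_comp L hL x]
  rw [this]
  exact (((ContinuousLinearMap.compL ℝ E (E × E) ℝ).flip
    (ContinuousLinearMap.inl ℝ E E)).differentiable).comp hfd

lemma D2_differentiable (L : E × E → ℝ) (hL : ContDiff ℝ (⊤ : ℕ∞) L) :
    Differentiable ℝ (fun x => D2 L x) := by
  have hfd : Differentiable ℝ (fun x => fderiv ℝ L x) :=
    (hL.fderiv_right (m := (⊤ : ℕ∞)) (by simp)).differentiable (by simp)
  have : (fun x => D2 L x)
      = fun x => ((ContinuousLinearMap.compL ℝ E (E × E) ℝ).flip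
          (ContinuousLinearMap.inr ℝ E E)) (fderiv ℝ L x) := by
    funext x
    simp [D2_eq_comp L hL x]
  rw [this]
  exact (((ContinuousLinearMap.compL ℝ E (E × E) ℝ).flip
    (ContinuousLinearMap.inr ℝ E E)).differentiable).comp hfd

/-- Key computation: pullback of `omegaQ` under `y ↦ (π y, g y)` equals
`-extd` of the 1-form `y ↦ (g y).comp π`. -/
lemma key_pullback (g : E × E → (E →L[ℝ] ℝ)) (hg : Differentiable ℝ g)
    (π : (E × E) →L[ℝ] E) (x U V : E × E) :
    omegaQ (fderiv ℝ (fun y => (π y, g y)) x U) (fderiv ℝ (fun y => (π y, g y)) x V)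
      = -extd (fun y => (g y).comp π) x U V := by
  have hF : fderiv ℝ (fun y => (π y, g y)) x = π.prod (fderiv ℝ g x) :=
    (HasFDerivAt.prodMk π.hasFDerivAt (hg x).hasFDerivAt).fderiv
  have hθ : fderiv ℝ (fun y => (g y).comp π) x
      = ((ContinuousLinearMap.compL ℝ (E × E) E ℝ).flip π).comp (fderiv ℝ g x) := by
    have : HasFDerivAt (fun y => ((ContinuousLinearMap.compL ℝ (E × E) E ℝ).flip π) (g y))
        (((ContinuousLinearMap.compL ℝ (E × E) E ℝ).flip π).comp (fderiv ℝ g x)) x :=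
      ((ContinuousLinearMap.compL ℝ (E × E) E ℝ).flip π).hasFDerivAt.comp x (hg x).hasFDerivAt
    simpa using this.fderiv
  simp only [omegaQ, extd, hF, hθ]
  simp only [ContinuousLinearMap.comp_apply, ContinuousLinearMap.prod_apply,
    ContinuousLinearMap.flip_apply, ContinuousLinearMap.compL_apply]
  ring

end Aux

/-- **Pullback of the canonical symplectic form by the forced discrete Legendre
transforms recovers `ω⁺` and `ω⁻`.** -/
theorem pullback_canonical_symplectic_form
    (Ld : E × E → ℝ) (fm fp : E × E → (E →L[ℝ] ℝ))
    (hLd : ContDiff ℝ (⊤ : ℕ∞) Ld) (hfm : ContDiff ℝ (⊤ : ℕ∞) fm) (hfp : ContDiff ℝ (⊤ : ℕ∞) fp) :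
    (∀ (x : E × E) (U V : E × E),
        omegaQ (fderiv ℝ (FLp Ld fp) x U) (fderiv ℝ (FLp Ld fp) x V)
          = omegaP Ld fp x U V)
    ∧ (∀ (x : E × E) (U V : E × E),
        omegaQ (fderiv ℝ (FLm Ld fm) x U) (fderiv ℝ (FLm Ld fm) x V)
          = omegaM Ld fm x U V) := by
  constructor
  · intro x U V
    have hg : Differentiable ℝ (fun x => D2 Ld x + fp x) :=
      (D2_differentiable Ld hLd).add (hfp.differentiable (by simp))
    have h1 : FLp Ld fp = fun y : E × E =>
        ((ContinuousLinearMap.snd ℝ E E) y, D2 Ld y + fp y) := rfl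
    have h2 : thetaP Ld fp = fun y : E × E =>
        (D2 Ld y + fp y).comp (ContinuousLinearMap.snd ℝ E E) := rfl
    rw [omegaP, h2, h1]
    exact key_pullback _ hg (ContinuousLinearMap.snd ℝ E E) x U V
  · intro x U V
    have hg : Differentiable ℝ (fun x => -(D1 Ld x + fm x)) :=
      ((D1_differentiable Ld hLd).add (hfm.differentiable (by simp))).neg
    have h1 : FLm Ld fm = fun y : E × E =>
        ((ContinuousLinearMap.fst ℝ E E) y, -(D1 Ld y + fm y)) := by
      funext y
      simp only [FLm, neg_add, sub_eq_add_neg]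
      abel_nf
      rfl
    have h2 : thetaM Ld fm = fun y : E × E =>
        (-(D1 Ld y + fm y)).comp (ContinuousLinearMap.fst ℝ E E) := by
      funext y
      simp [thetaM]
    rw [omegaM, h2, h1]
    exact key_pullback _ hg (ContinuousLinearMap.fst ℝ E E) x U V
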